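/- Let R be a discrete valuation domain. Then every left R-module M is the union of a countable increasing chain of submodules {M_n : n < ω}, each of which is a direct sum of cyclic modules. Consequently, every R-module is filtered by (indeed is a countable totally ordered direct limit of) direct sums of cyclic modules. -/

import Mathlib

/-!
Fix a uniformizer `p` and a maximal linearly independent set `I ⊆ M`; then `M₀ = span I` is free,
`M ⧸ M₀` is torsion, and so the submodules `Mₙ = {m | pⁿ • m ∈ M₀}` exhaust `M`. Multiplication
by `pⁿ` maps `Mₙ` onto a submodule of `M₀`, which is free because `R` is a PID (well-order a basis
of `M₀` and pick triangular generators). Hence `Mₙ` splits as a free module plus the kernel, which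
is killed by `pⁿ`. A module killed by `pⁿ` is a direct sum of cyclics by Prüfer's argument: take
a maximal independent family of cyclic submodules whose sum is `p`-pure; if the sum were proper,
an element of maximal order modulo it could be adjusted by purity into a new independent summand.
-/

universe u

/-- `M` is (an internal) direct sum of cyclic modules. -/
def IsDirectSumOfCyclics (R : Type) [Ring R] (M : Type u) [AddCommGroup M]
    [Module R M] : Prop :=
  ∃ (ι : Type u) (N : ι → Submodule R M),
    (letI : DecidableEq ι := Classical.decEq ι; DirectSum.IsInternal N) ∧
    ∀ i : ι, ∃ m : M, N i = Submodule.span R {m}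

open Set

section Lattice
variable {α : Type*} [CompleteLattice α] [IsModularLattice α]

theorem iSupIndep.sum_elim {ι κ : Type*} {f : ι → α} {g : κ → α} (hf : iSupIndep f)
    (hg : iSupIndep g) (hfg : Disjoint (⨆ i, f i) (⨆ j, g j)) : iSupIndep (Sum.elim f g) := by
  rintro (a | b)
  · refine ((hf a).disjoint_sup_right_of_disjoint_sup_left
      (hfg.mono_left (sup_le (le_iSup f a) (iSup₂_le fun i _ => le_iSup f i)))).mono_right ?_
    refine iSup₂_le ?_
    rintro (i | j) hne
    · exact le_sup_of_le_left (le_iSup₂_of_le i (fun h => hne (congrArg _ h)) le_rfl)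
    · exact le_sup_of_le_right (le_iSup g j)
  · refine ((hg b).disjoint_sup_right_of_disjoint_sup_left
      (hfg.symm.mono_left (sup_le (le_iSup g b) (iSup₂_le fun j _ => le_iSup g j)))).mono_right ?_
    refine iSup₂_le ?_
    rintro (i | j) hne
    · exact le_sup_of_le_right (le_iSup f i)
    · exact le_sup_of_le_left (le_iSup₂_of_le j (fun h => hne (congrArg _ h)) le_rfl)

theorem sSupIndep.insert_of_disjoint {S : Set α} {a : α} (hS : sSupIndep S)
    (ha : Disjoint a (sSup S)) : sSupIndep (insert a S) := by
  rintro x (rfl | hx)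
  · exact ha.mono_right (sSup_le_sSup fun y hy => hy.1.resolve_left hy.2)
  · refine ((hS hx).disjoint_sup_right_of_disjoint_sup_left
      (ha.symm.mono_left (sup_le (le_sSup hx) (sSup_le_sSup sdiff_subset)))).mono_right ?_
    refine sSup_le ?_
    rintro y ⟨rfl | hy, hne⟩
    · exact le_sup_right
    · exact le_sup_of_le_left (le_sSup ⟨hy, hne⟩)

end Lattice

section DirectSumOfCyclics
variable {R : Type} [CommRing R] {W : Type u} [AddCommGroup W] [Module R W]

theorem isDirectSumOfCyclics_iff : IsDirectSumOfCyclics R W ↔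
    ∃ (ι : Type u) (N : ι → Submodule R W),
      iSupIndep N ∧ ⨆ i, N i = ⊤ ∧ ∀ i, ∃ m : W, N i = R ∙ m := by
  simp only [IsDirectSumOfCyclics, DirectSum.isInternal_submodule_iff_iSupIndep_and_iSup_eq_top,
    and_assoc]

theorem isDirectSumOfCyclics_of_sSupIndep {S : Set (Submodule R W)} (hS : sSupIndep S)
    (htop : sSup S = ⊤) (hcyc : ∀ N ∈ S, ∃ m : W, N = R ∙ m) : IsDirectSumOfCyclics R W :=
  isDirectSumOfCyclics_iff.2 ⟨S, Subtype.val, (sSupIndep_iff S).1 hS,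
    by rwa [← sSup_eq_iSup'], fun N => hcyc N N.2⟩

theorem IsDirectSumOfCyclics.of_basis {ι : Type u} (b : Module.Basis ι R W) :
    IsDirectSumOfCyclics R W :=
  isDirectSumOfCyclics_iff.2 ⟨ι, fun i => R ∙ b i, b.linearIndependent.iSupIndep_span_singleton,
    by rw [← Submodule.span_range_eq_iSup, b.span_eq], fun i => ⟨b i, rfl⟩⟩

theorem IsDirectSumOfCyclics.of_free [Module.Free R W] : IsDirectSumOfCyclics R W :=
  .of_basis (Module.Free.chooseBasis R W)

theorem exists_map_eq_span_singleton {W' : Type*} [AddCommGroup W'] [Module R W']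
    (f : W →ₗ[R] W') {N : Submodule R W} (hN : ∃ m : W, N = R ∙ m) :
    ∃ m : W', N.map f = R ∙ m := by
  obtain ⟨m, rfl⟩ := hN
  exact ⟨f m, by rw [Submodule.map_span, image_singleton]⟩

theorem iSup_map_eq_range {ι : Type*} {W' : Type*} [AddCommGroup W'] [Module R W']
    (f : W →ₗ[R] W') {N : ι → Submodule R W} (htop : ⨆ i, N i = ⊤) :
    ⨆ i, (N i).map f = LinearMap.range f := by
  rw [← Submodule.map_iSup, htop, Submodule.map_top]

theorem IsDirectSumOfCyclics.of_linearEquiv {W' : Type u} [AddCommGroup W'] [Module R W']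
    (e : W ≃ₗ[R] W') (h : IsDirectSumOfCyclics R W) : IsDirectSumOfCyclics R W' := by
  obtain ⟨ι, N, hind, htop, hcyc⟩ := isDirectSumOfCyclics_iff.1 h
  refine isDirectSumOfCyclics_iff.2 ⟨ι, fun i => (N i).map (e : W →ₗ[R] W'),
    (e : W →ₗ[R] W').iSupIndep_map e.injective hind, ?_,
    fun i => exists_map_eq_span_singleton _ (hcyc i)⟩
  rw [iSup_map_eq_range _ htop, LinearEquiv.range]

theorem IsDirectSumOfCyclics.prod {W' : Type u} [AddCommGroup W'] [Module R W']
    (h : IsDirectSumOfCyclics R W) (h' : IsDirectSumOfCyclics R W') :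
    IsDirectSumOfCyclics R (W × W') := by
  obtain ⟨ι, N, hind, htop, hcyc⟩ := isDirectSumOfCyclics_iff.1 h
  obtain ⟨κ, N', hind', htop', hcyc'⟩ := isDirectSumOfCyclics_iff.1 h'
  set f := LinearMap.inl R W W'
  set g := LinearMap.inr R W W'
  refine isDirectSumOfCyclics_iff.2
    ⟨ι ⊕ κ, Sum.elim (fun i => (N i).map f) (fun j => (N' j).map g), ?_, ?_, ?_⟩
  · refine (f.iSupIndep_map LinearMap.inl_injective hind).sum_elim
      (g.iSupIndep_map LinearMap.inr_injective hind') ?_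
    rw [iSup_map_eq_range f htop, iSup_map_eq_range g htop']
    exact LinearMap.isCompl_range_inl_inr.disjoint
  · rw [iSup_sum]
    simp only [Sum.elim_inl, Sum.elim_inr]
    rw [iSup_map_eq_range f htop, iSup_map_eq_range g htop']
    exact LinearMap.isCompl_range_inl_inr.sup_eq_top
  · rintro (i | j)
    exacts [exists_map_eq_span_singleton f (hcyc i), exists_map_eq_span_singleton g (hcyc' j)]

end DirectSumOfCyclics

section FreeSubmodule
variable {R : Type*} [CommRing R] {ι : Type*} [LinearOrder ι]

theorem Finsupp.mem_supported_Iic_max' (y : ι →₀ R) (hy : y.support.Nonempty) :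
    y ∈ Finsupp.supported R R (Iic (y.support.max' hy)) :=
  fun _ hj => Finset.le_max' _ _ hj

theorem linearIndepOn_of_triangular [IsDomain R] {v : ι → ι →₀ R} {s : Set ι}
    (hsupp : ∀ i ∈ s, v i ∈ Finsupp.supported R R (Iic i)) (hdiag : ∀ i ∈ s, v i i ≠ 0) :
    LinearIndepOn R v s := by
  rw [linearIndepOn_iff]
  intro l hls hl
  by_contra hl0
  have hne : l.support.Nonempty := Finsupp.support_nonempty_iff.2 hl0
  set i := l.support.max' hne
  have hi : i ∈ l.support := l.support.max'_mem hne
  -- only the leading vector `v i` contributes to the `i`-th coordinate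
  have hcoord : Finsupp.linearCombination R v l i = l i * v i i := by
    rw [Finsupp.linearCombination_apply, Finsupp.sum_apply, Finsupp.sum, Finset.sum_eq_single i]
    · rfl
    · intro j hj hji
      have hlt : j < i := lt_of_le_of_ne (l.support.le_max' j hj) hji
      have hvj : v j i = 0 := Finsupp.notMem_support_iff.1 fun h =>
        (hsupp j (hls hj) h).not_gt hlt
      simp [hvj]
    · exact fun h => absurd hi h
  rw [hl, Finsupp.zero_apply] at hcoord
  exact mul_ne_zero (Finsupp.mem_support_iff.1 hi) (hdiag i (hls hi)) hcoord.symm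

theorem span_image_eq_of_triangular [WellFoundedLT ι] {N : Submodule R (ι →₀ R)}
    {x : ι → ι →₀ R} (hxN : ∀ i, x i ∈ N) (hsupp : ∀ i, x i ∈ Finsupp.supported R R (Iic i))
    (hdvd : ∀ i, ∀ y ∈ N, y ∈ Finsupp.supported R R (Iic i) → x i i ∣ y i) :
    Submodule.span R (x '' {i | x i i ≠ 0}) = N := by
  set S := Submodule.span R (x '' {i | x i i ≠ 0})
  have hSN : S ≤ N := Submodule.span_le.2 (image_subset_iff.2 fun i _ => hxN i)
  suffices key : ∀ i, ∀ y ∈ N, y ∈ Finsupp.supported R R (Iic i) → y ∈ S by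
    refine le_antisymm hSN fun y hy => ?_
    by_cases hy0 : y = 0
    · exact hy0 ▸ S.zero_mem
    · exact key _ y hy (y.mem_supported_Iic_max' (Finsupp.support_nonempty_iff.2 hy0))
  intro i
  induction i using WellFoundedLT.induction with | _ i ih => ?_
  intro y hyN hy
  -- subtract a multiple of `x i` to kill the `i`-th coordinate
  obtain ⟨w, hwS, hwsupp, hwi⟩ :
      ∃ w ∈ S, w ∈ Finsupp.supported R R (Iic i) ∧ w i = y i := by
    obtain ⟨t, ht⟩ := hdvd i y hyN hy
    by_cases hxi : x i i = 0
    · exact ⟨0, S.zero_mem, Submodule.zero_mem _, by rw [ht, hxi, zero_mul, Finsupp.zero_apply]⟩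
    · exact ⟨t • x i, S.smul_mem t (Submodule.subset_span ⟨i, hxi, rfl⟩),
        Submodule.smul_mem _ t (hsupp i), by rw [Finsupp.smul_apply, smul_eq_mul, ht, mul_comm]⟩
  have hzN : y - w ∈ N := N.sub_mem hyN (hSN hwS)
  by_cases hz0 : y - w = 0
  · rwa [sub_eq_zero.1 hz0]
  have hzne := Finsupp.support_nonempty_iff.2 hz0
  have hj := (y - w).support.max'_mem hzne
  have hlt : (y - w).support.max' hzne < i := by
    refine lt_of_le_of_ne (Submodule.sub_mem _ hy hwsupp hj) fun h => ?_
    rw [Finsupp.mem_support_iff, h, Finsupp.sub_apply, hwi, sub_self] at hj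
    exact hj rfl
  simpa using S.add_mem (ih _ hlt (y - w) hzN ((y - w).mem_supported_Iic_max' hzne)) hwS

theorem exists_triangular_generators [IsPrincipalIdealRing R] (N : Submodule R (ι →₀ R)) :
    ∃ x : ι → ι →₀ R, (∀ i, x i ∈ N) ∧ (∀ i, x i ∈ Finsupp.supported R R (Iic i)) ∧
      ∀ i, ∀ y ∈ N, y ∈ Finsupp.supported R R (Iic i) → x i i ∣ y i := by
  -- `x i` is a lift of a generator of the ideal of `i`-th coordinates of `N ⊓ supported (Iic i)`
  have (i : ι) : ∃ x ∈ N ⊓ Finsupp.supported R R (Iic i),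
      ∀ y ∈ N ⊓ Finsupp.supported R R (Iic i), x i ∣ y i := by
    set I : Ideal R := (N ⊓ Finsupp.supported R R (Iic i)).map (Finsupp.lapply i)
    obtain ⟨x, hx, hxi⟩ := Submodule.mem_map.1 (Submodule.IsPrincipal.generator_mem I)
    refine ⟨x, hx, fun y hy => ?_⟩
    rw [show x i = _ from hxi, ← Submodule.IsPrincipal.mem_iff_generator_dvd]
    exact Submodule.mem_map_of_mem hy
  choose x hx hdvd using this
  exact ⟨x, fun i => (hx i).1, fun i => (hx i).2, fun i y hy hy' => hdvd i y ⟨hy, hy'⟩⟩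

end FreeSubmodule

theorem Submodule.free_of_isPrincipalIdealRing {R : Type*} [CommRing R] [IsDomain R]
    [IsPrincipalIdealRing R] {M : Type*} [AddCommGroup M] [Module R M] [Module.Free R M]
    (N : Submodule R M) : Module.Free R N := by
  let b := Module.Free.chooseBasis R M
  let N' := N.map (b.repr : M →ₗ[R] Module.Free.ChooseBasisIndex R M →₀ R)
  suffices Module.Free R N' from
    .of_equiv (Submodule.equivMapOfInjective _ b.repr.injective N).symm
  obtain ⟨_, _⟩ := exists_wellFoundedLT (Module.Free.ChooseBasisIndex R M)
  obtain ⟨x, hxN, hsupp, hdvd⟩ := exists_triangular_generators N'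
  have hli := linearIndepOn_of_triangular (fun i _ => hsupp i) (s := {i | x i i ≠ 0}) fun _ h => h
  have hspan : Submodule.span R (range fun i : {i | x i i ≠ 0} => x i) = N' := by
    rw [← image_eq_range, span_image_eq_of_triangular hxN hsupp hdvd]
  have := Module.Free.of_basis (Module.Basis.span hli)
  exact .of_equiv (LinearEquiv.ofEq _ _ hspan)

section Pure
variable {R : Type*} [CommRing R] {W : Type*} [AddCommGroup W] [Module R W] {p : R}

def Submodule.IsPPure (p : R) (N : Submodule R W) : Prop :=
  ∀ (k : ℕ) (w : W), p ^ k • w ∈ N → ∃ y ∈ N, p ^ k • y = p ^ k • w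

theorem Submodule.isPPure_bot (p : R) : (⊥ : Submodule R W).IsPPure p :=
  fun _ _ hw => ⟨0, Submodule.zero_mem _, by rw [smul_zero, (Submodule.mem_bot R).1 hw]⟩

theorem Submodule.IsPPure.sSup_of_directedOn {T : Set (Submodule R W)} (hT : T.Nonempty)
    (hdir : DirectedOn (· ≤ ·) T) (h : ∀ N ∈ T, N.IsPPure p) : (sSup T).IsPPure p := by
  intro k w hw
  obtain ⟨N, hN, hwN⟩ := (Submodule.mem_sSup_of_directed hT hdir).1 hw
  obtain ⟨y, hy, hyw⟩ := h N hN k w hwN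
  exact ⟨y, Submodule.mem_sSup_of_mem hN hy, hyw⟩

theorem Submodule.IsPPure.of_map_mkQ {N K : Submodule R W} (hN : N.IsPPure p) (hNK : N ≤ K)
    (hK : (K.map N.mkQ).IsPPure p) : K.IsPPure p := by
  intro k w hw
  obtain ⟨_, ⟨y, hyK, rfl⟩, hy⟩ := hK k (N.mkQ w) ⟨_, hw, map_smul N.mkQ _ w⟩
  have hwy : p ^ k • (w - y) ∈ N := by
    rwa [← Submodule.Quotient.mk_eq_zero, smul_sub, Submodule.Quotient.mk_sub, sub_eq_zero,
      Submodule.Quotient.mk_smul, eq_comm]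
  obtain ⟨z, hzN, hz⟩ := hN k _ hwy
  exact ⟨y + z, K.add_mem hyK (hNK hzN), by rw [smul_add, hz, smul_sub, add_sub_cancel]⟩

theorem pow_smul_eq_zero_of_le {x : W} {j k : ℕ} (hjk : j ≤ k) (hx : p ^ j • x = 0) :
    p ^ k • x = 0 := by
  rw [← Nat.sub_add_cancel hjk, pow_add, mul_smul, hx, smul_zero]

theorem exists_pow_smul_ne_zero_of_pow_smul_eq_zero [Nontrivial W] {n : ℕ}
    (hbdd : ∀ w : W, p ^ n • w = 0) :
    ∃ (m : ℕ) (b : W), p ^ m • b ≠ 0 ∧ ∀ w : W, p ^ (m + 1) • w = 0 := by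
  classical
  have hex : ∃ e, ∀ w : W, p ^ e • w = 0 := ⟨n, hbdd⟩
  have hfind : Nat.find hex ≠ 0 := fun h0 => by
    obtain ⟨b, hb⟩ := exists_ne (0 : W)
    exact hb (by simpa [h0] using Nat.find_spec hex b)
  obtain ⟨m, hm⟩ := Nat.exists_eq_add_one_of_ne_zero hfind
  obtain ⟨b, hb⟩ := not_forall.1 (Nat.find_min hex (hm ▸ m.lt_add_one))
  exact ⟨m, b, hb, hm ▸ Nat.find_spec hex⟩

variable [IsDomain R] [IsDiscreteValuationRing R]

theorem smul_eq_zero_iff_pow_dvd (hp : Irreducible p) {x : W} {m : ℕ}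
    (hx : p ^ (m + 1) • x = 0) (hxm : p ^ m • x ≠ 0) (r : R) : r • x = 0 ↔ p ^ (m + 1) ∣ r := by
  refine ⟨fun hr => ?_, fun ⟨c, hc⟩ => by rw [hc, mul_comm, mul_smul, hx, smul_zero]⟩
  by_cases hr0 : r = 0
  · exact hr0 ▸ dvd_zero _
  obtain ⟨k, u, rfl⟩ := IsDiscreteValuationRing.eq_unit_mul_pow_irreducible hr0 hp
  by_cases hk : m + 1 ≤ k
  · exact (pow_dvd_pow p hk).mul_left _
  refine absurd ?_ hxm
  have : p ^ m = (↑u⁻¹ * p ^ (m - k)) * (↑u * p ^ k) := by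
    rw [mul_mul_mul_comm, Units.inv_mul, one_mul, ← pow_add, Nat.sub_add_cancel (by omega)]
  rw [this, mul_smul, hr, smul_zero]

theorem isPPure_span_singleton (hp : Irreducible p) {m : ℕ} {b : W}
    (hexp : ∀ w : W, p ^ (m + 1) • w = 0) (hb : p ^ m • b ≠ 0) : (R ∙ b).IsPPure p := by
  intro k w hw
  obtain ⟨s, hs⟩ := Submodule.mem_span_singleton.1 hw
  by_cases hk : m + 1 ≤ k
  · exact ⟨0, Submodule.zero_mem _, by rw [smul_zero, pow_smul_eq_zero_of_le hk (hexp w)]⟩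
  -- `p ^ (m + 1 - k) * s` kills `b`, so `p ^ k ∣ s`
  have hdvd : p ^ (m + 1 - k) * p ^ k ∣ p ^ (m + 1 - k) * s := by
    rw [← pow_add, Nat.sub_add_cancel (by omega), ← smul_eq_zero_iff_pow_dvd hp (hexp b) hb,
      mul_smul, hs, ← mul_smul, ← pow_add, Nat.sub_add_cancel (by omega), hexp]
  obtain ⟨t, rfl⟩ := (mul_dvd_mul_iff_left (pow_ne_zero _ hp.ne_zero)).1 hdvd
  exact ⟨t • b, Submodule.smul_mem _ t (Submodule.mem_span_singleton_self b), by
    rw [smul_smul, hs]⟩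

end Pure

section Bounded
variable {R : Type} [CommRing R] [IsDomain R] [IsDiscreteValuationRing R] {p : R}

theorem exists_disjoint_isPPure_sup_span_singleton {W : Type*} [AddCommGroup W] [Module R W]
    (hp : Irreducible p) {n : ℕ} (hbdd : ∀ w : W, p ^ n • w = 0) {N : Submodule R W}
    (hN : N.IsPPure p) (hNtop : N ≠ ⊤) :
    ∃ b ∉ N, Disjoint (R ∙ b) N ∧ (R ∙ b ⊔ N).IsPPure p := by
  have := Submodule.Quotient.nontrivial_iff.2 hNtop
  obtain ⟨m, q, hq, hexp⟩ := exists_pow_smul_ne_zero_of_pow_smul_eq_zero (W := W ⧸ N) (n := n)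
    fun w => by
      obtain ⟨w, rfl⟩ := N.mkQ_surjective w
      rw [← map_smul, hbdd, map_zero]
  obtain ⟨b, rfl⟩ := N.mkQ_surjective q
  -- by purity, `q` lifts to an element `b - y` of the same order
  obtain ⟨y, hyN, hy⟩ := hN (m + 1) b <| by
    rw [← Submodule.Quotient.mk_eq_zero, Submodule.Quotient.mk_smul]; exact hexp _
  have hlift : N.mkQ (b - y) = N.mkQ b := by
    rw [map_sub, N.mkQ_apply y, (Submodule.Quotient.mk_eq_zero N).2 hyN, sub_zero]
  have hord : p ^ (m + 1) • (b - y) = 0 := by rw [smul_sub, hy, sub_self]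
  rw [← hlift] at hq
  refine ⟨b - y, fun h => hq ?_, ?_, ?_⟩
  · rw [N.mkQ_apply, (Submodule.Quotient.mk_eq_zero N).2 h, smul_zero]
  · refine Submodule.disjoint_def.2 fun z hz hzN => ?_
    obtain ⟨r, rfl⟩ := Submodule.mem_span_singleton.1 hz
    have : r • N.mkQ (b - y) = 0 := by
      rwa [← map_smul, N.mkQ_apply, Submodule.Quotient.mk_eq_zero]
    obtain ⟨c, rfl⟩ := (smul_eq_zero_iff_pow_dvd hp (hexp _) hq r).1 this
    rw [mul_comm, mul_smul, hord, smul_zero]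
  · refine hN.of_map_mkQ le_sup_right ?_
    rw [Submodule.map_sup, Submodule.mkQ_map_self, sup_bot_eq, Submodule.map_span, image_singleton]
    exact isPPure_span_singleton hp hexp hq

theorem isDirectSumOfCyclics_of_pow_smul_eq_zero {W : Type u} [AddCommGroup W] [Module R W]
    (hp : Irreducible p) (n : ℕ) (hbdd : ∀ w : W, p ^ n • w = 0) : IsDirectSumOfCyclics R W := by
  let Admissible : Set (Set (Submodule R W)) :=
    {S | (∀ N ∈ S, ∃ m : W, N = R ∙ m) ∧ sSupIndep S ∧ (sSup S).IsPPure p}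
  have hchain : ∀ c ⊆ Admissible, IsChain (· ⊆ ·) c → c.Nonempty →
      ∃ S ∈ Admissible, ∀ T ∈ c, T ⊆ S := by
    intro c hcG hc hne
    refine ⟨⋃₀ c, ⟨?_, iSupIndep_sUnion_of_directed hc.directedOn fun S hS => (hcG hS).2.1, ?_⟩,
      fun _ => subset_sUnion_of_mem⟩
    · rintro N ⟨S, hS, hN⟩
      exact (hcG hS).1 N hN
    · rw [sSup_sUnion, ← sSup_image]
      refine Submodule.IsPPure.sSup_of_directedOn (hne.image _) ?_ ?_
      · exact (directedOn_image.2 (hc.directedOn.mono fun _ _ h => sSup_le_sSup h))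
      · rintro _ ⟨S, hS, rfl⟩
        exact (hcG hS).2.2
  obtain ⟨S, -, hS⟩ := zorn_subset_nonempty Admissible hchain ∅
    ⟨by simp, sSupIndep_empty, by simpa using Submodule.isPPure_bot p⟩
  obtain ⟨hcyc, hind, hpure⟩ := hS.prop
  refine isDirectSumOfCyclics_of_sSupIndep hind ?_ hcyc
  by_contra htop
  obtain ⟨b, hb, hdisj, hpure'⟩ := exists_disjoint_isPPure_sup_span_singleton hp hbdd hpure htop
  have hins : insert (R ∙ b) S ∈ Admissible := by
    refine ⟨?_, hind.insert_of_disjoint hdisj, by rwa [sSup_insert]⟩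
    rintro N (rfl | hN)
    exacts [⟨b, rfl⟩, hcyc N hN]
  exact hb (Submodule.mem_sSup_of_mem (hS.2 hins (subset_insert _ _) (mem_insert _ _))
    (Submodule.mem_span_singleton_self b))

end Bounded

theorem nonempty_linearEquiv_ker_prod_of_surjective {R : Type*} [Ring R] {M N : Type*}
    [AddCommGroup M] [Module R M] [AddCommGroup N] [Module R N] [Module.Projective R N]
    (f : M →ₗ[R] N) (hf : Function.Surjective f) : Nonempty (M ≃ₗ[R] LinearMap.ker f × N) := by
  obtain ⟨l, hl⟩ := f.exists_rightInverse_of_surjective (LinearMap.range_eq_top.2 hf)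
  exact ⟨(f.exact_subtype_ker_map.splitSurjectiveEquiv (Submodule.injective_subtype _) ⟨l, hl⟩).1⟩

section Chain
variable {R : Type} [CommRing R] {W : Type u} [AddCommGroup W] [Module R W]

theorem monotone_comap_pow_smul (p : R) (N : Submodule R W) :
    Monotone fun n : ℕ => N.comap (p ^ n • LinearMap.id) := by
  refine monotone_nat_of_le_succ fun n x (hx : p ^ n • x ∈ N) => ?_
  show p ^ (n + 1) • x ∈ N
  rw [pow_succ', mul_smul]
  exact N.smul_mem p hx

variable [IsDomain R] [IsDiscreteValuationRing R] {p : R}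

theorem iSup_comap_pow_smul_eq_top (hp : Irreducible p) {N : Submodule R W}
    (htors : ∀ x : W, ∃ a ≠ (0 : R), a • x ∈ N) :
    ⨆ n : ℕ, N.comap (p ^ n • LinearMap.id) = ⊤ := by
  refine eq_top_iff.2 fun x _ => ?_
  obtain ⟨a, ha, hax⟩ := htors x
  obtain ⟨k, u, rfl⟩ := IsDiscreteValuationRing.eq_unit_mul_pow_irreducible ha hp
  refine Submodule.mem_iSup_of_mem k (?_ : p ^ k • x ∈ N)
  rwa [mul_smul, ← Units.smul_def, N.smul_mem_iff'] at hax

theorem isDirectSumOfCyclics_of_pow_smul_mem (hp : Irreducible p) (n : ℕ)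
    {F B : Submodule R W} [Module.Free R F] (hB : ∀ x ∈ B, p ^ n • x ∈ F) :
    IsDirectSumOfCyclics R B := by
  let φ : B →ₗ[R] W := p ^ n • B.subtype
  have hφF : LinearMap.range φ ≤ F := by
    rintro _ ⟨x, rfl⟩
    exact hB x x.2
  have := Submodule.free_of_isPrincipalIdealRing ((LinearMap.range φ).comap F.subtype)
  have : Module.Free R (LinearMap.range φ) := .of_equiv (Submodule.comapSubtypeEquivOfLe hφF)
  -- `B` splits as the kernel of `φ`, which `p ^ n` kills, plus the free module `range φ`
  obtain ⟨e⟩ := nonempty_linearEquiv_ker_prod_of_surjective _ φ.surjective_rangeRestrict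
  refine .of_linearEquiv e.symm (.prod (isDirectSumOfCyclics_of_pow_smul_eq_zero hp n fun t => ?_)
    .of_free)
  have ht : φ t = 0 := congrArg Subtype.val (LinearMap.mem_ker.1 t.2)
  exact Subtype.ext (Subtype.ext ht)

end Chain

/-- Over a discrete valuation domain, every module is the union of a countable increasing
chain of submodules each of which is a direct sum of cyclic modules. -/
theorem exists_countable_chain_of_directSumsOfCyclics
    (R : Type) [CommRing R] [IsDomain R] [IsDiscreteValuationRing R]
    (M : Type) [AddCommGroup M] [Module R M] :
    ∃ Mc : ℕ → Submodule R M, Monotone Mc ∧ (⨆ n : ℕ, Mc n) = ⊤ ∧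
      ∀ n : ℕ, IsDirectSumOfCyclics R (↥(Mc n)) := by
  obtain ⟨p, hp⟩ := IsDiscreteValuationRing.exists_irreducible R
  obtain ⟨I, hI, hImax⟩ := exists_maximal_linearIndepOn R (id : M → M)
  rw [image_eq_range] at hImax
  let M₀ := Submodule.span R (range fun x : I => id (x : M))
  have : Module.Free R M₀ := .of_basis (Module.Basis.span hI)
  have htors (x : M) : ∃ a ≠ (0 : R), a • x ∈ M₀ := by
    by_cases hx : x ∈ I
    · exact ⟨1, one_ne_zero, by rw [one_smul]; exact Submodule.subset_span ⟨⟨x, hx⟩, rfl⟩⟩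
    · exact hImax x hx
  exact ⟨fun n => M₀.comap (p ^ n • LinearMap.id), monotone_comap_pow_smul p M₀,
    iSup_comap_pow_smul_eq_top hp htors,
    fun n => isDirectSumOfCyclics_of_pow_smul_mem hp n (F := M₀) fun _ hx => hx⟩
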